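/- arXiv:math/9501210 — 2 statements merged into one kernel-verified Lean document; each statement's English description precedes it below -/
import Mathlib

section
/- If B is a p-ball in ℝⁿ and B̂ = conv(B), then the volume ratio satisfies (|B̂|/|B|)^(1/n) ≤ n^(1/p−1). -/
open MeasureTheory Set Pointwise ENNReal

noncomputable section

/-- `B` is a `p`-ball in `ℝⁿ`: a compact symmetric `p`-convex set with `0` in its
interior. -/
def IsPBall (n : ℕ) (p : ℝ) (B : Set (Fin n → ℝ)) : Prop :=
  IsCompact B ∧ B = -B ∧ (0 : Fin n → ℝ) ∈ interior B ∧
    ∀ x ∈ B, ∀ y ∈ B, ∀ l m : ℝ, 0 ≤ l → 0 ≤ m → l ^ p + m ^ p = 1 →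
      l • x + m • y ∈ B

/-- The polar set `B° = {x : ⟨x,y⟩ ≤ 1 for all y ∈ B}`. -/
def polarSet (n : ℕ) (B : Set (Fin n → ℝ)) : Set (Fin n → ℝ) :=
  {x | ∀ y ∈ B, ∑ i, x i * y i ≤ 1}

/-- The Euclidean unit ball of `ℝⁿ`. -/
def euclBall (n : ℕ) : Set (Fin n → ℝ) := {x | ∑ i, x i ^ 2 ≤ 1}

/-- The volume product `s(B) = (|B| · |B°|)^(1/n)`. -/
def sVol (n : ℕ) (B : Set (Fin n → ℝ)) : ℝ :=
  ((volume B).toReal * (volume (polarSet n B)).toReal) ^ ((1 : ℝ) / n)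

/-- `M(B,D) = ((|B+D|/|B∩D|) · (|B°+D°|/|B°∩D°|))^(1/n)`. -/
def MVol (n : ℕ) (B D : Set (Fin n → ℝ)) : ℝ :=
  (((volume (B + D)).toReal / (volume (B ∩ D)).toReal) *
    ((volume (polarSet n B + polarSet n D)).toReal /
      (volume (polarSet n B ∩ polarSet n D)).toReal)) ^ ((1 : ℝ) / n)

/-- `D` is a (centered) ellipsoid: a linear image of the Euclidean unit ball. -/
def IsEllipsoid (n : ℕ) (D : Set (Fin n → ℝ)) : Prop :=
  ∃ u : (Fin n → ℝ) ≃ₗ[ℝ] (Fin n → ℝ), D = u '' euclBall n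

section Aux

variable {n : ℕ} {p : ℝ} {B : Set (Fin n → ℝ)}

lemma IsPBall.zero_mem (hB : IsPBall n p B) : (0 : Fin n → ℝ) ∈ B :=
  interior_subset hB.2.2.1

lemma rpow_inv_self_rpow {x : ℝ} (hx : 0 ≤ x) (hp : p ≠ 0) : (x ^ (1/p)) ^ p = x := by
  rw [← Real.rpow_mul hx, one_div_mul_cancel hp, Real.rpow_one]

lemma IsPBall.smul_mem (hp : 0 < p) (hB : IsPBall n p B) {b : Fin n → ℝ} (hb : b ∈ B)
    {l : ℝ} (hl0 : 0 ≤ l) (hl1 : l ≤ 1) : l • b ∈ B := by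
  have hlp : l ^ p ≤ 1 := Real.rpow_le_one hl0 hl1 hp.le
  set m : ℝ := (1 - l ^ p) ^ (1/p) with hm
  have hm0 : 0 ≤ m := Real.rpow_nonneg (by linarith) _
  have hmp : m ^ p = 1 - l ^ p := rpow_inv_self_rpow (by linarith) hp.ne'
  have := hB.2.2.2 b hb 0 hB.zero_mem l m hl0 hm0 (by rw [hmp]; ring)
  simpa using this

lemma IsPBall.combo_mem (hp : 0 < p) (hB : IsPBall n p B) {x y : Fin n → ℝ}
    (hx : x ∈ B) (hy : y ∈ B) {l m : ℝ} (hl0 : 0 ≤ l) (hm0 : 0 ≤ m)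
    (hlm : l ^ p + m ^ p ≤ 1) : l • x + m • y ∈ B := by
  have hlp : 0 ≤ l ^ p := Real.rpow_nonneg hl0 _
  have hmp : 0 ≤ m ^ p := Real.rpow_nonneg hm0 _
  rcases eq_or_lt_of_le (by linarith : (0:ℝ) ≤ l ^ p + m ^ p) with h0 | h0
  · have hl : l = 0 := by
      have : l ^ p = 0 := by linarith
      exact (Real.rpow_eq_zero hl0 hp.ne').mp this
    have hm : m = 0 := by
      have : m ^ p = 0 := by linarith
      exact (Real.rpow_eq_zero hm0 hp.ne').mp this
    simpa [hl, hm] using hB.zero_mem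
  · set t : ℝ := (l ^ p + m ^ p) ^ (1/p) with ht
    have ht0 : 0 < t := Real.rpow_pos_of_pos h0 _
    have htp : t ^ p = l ^ p + m ^ p := rpow_inv_self_rpow (by linarith) hp.ne'
    have ht1 : t ≤ 1 := by
      by_contra hc
      push_neg at hc
      have : (1:ℝ) < t ^ p := by
        calc (1:ℝ) = 1 ^ p := (Real.one_rpow p).symm
        _ < t ^ p := Real.rpow_lt_rpow (by norm_num) hc hp
      linarith [htp ▸ this]
    have hz : (l/t) • x + (m/t) • y ∈ B := by
      refine hB.2.2.2 x hx y hy _ _ (by positivity) (by positivity) ?_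
      rw [Real.div_rpow hl0 ht0.le, Real.div_rpow hm0 ht0.le, htp]
      field_simp
    have := hB.smul_mem hp hz ht0.le ht1
    rwa [smul_add, smul_smul, smul_smul, mul_div_cancel₀ _ ht0.ne',
      mul_div_cancel₀ _ ht0.ne'] at this

lemma IsPBall.sum_mem (hp : 0 < p) (hB : IsPBall n p B) {ι : Type*} (s : Finset ι)
    (c : ι → Fin n → ℝ) (hc : ∀ i ∈ s, c i ∈ B) :
    ∀ a : ι → ℝ, (∀ i ∈ s, 0 ≤ a i) → (∑ i ∈ s, a i ^ p ≤ 1) → ∑ i ∈ s, a i • c i ∈ B := by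
  classical
  induction s using Finset.induction_on with
  | empty => intro a _ _; simpa using hB.zero_mem
  | @insert i s his ih =>
    intro a ha hsum
    have hc' : ∀ j ∈ s, c j ∈ B := fun j hj => hc j (Finset.mem_insert_of_mem hj)
    rw [Finset.sum_insert his] at hsum ⊢
    have ha' : ∀ j ∈ s, 0 ≤ a j := fun j hj => ha j (Finset.mem_insert_of_mem hj)
    have hSp0 : 0 ≤ ∑ j ∈ s, a j ^ p :=
      Finset.sum_nonneg fun j hj => Real.rpow_nonneg (ha' j hj) _
    have hai : 0 ≤ a i := ha i (Finset.mem_insert_self i s)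
    have haip : 0 ≤ a i ^ p := Real.rpow_nonneg hai _
    rcases eq_or_lt_of_le hSp0 with h0 | h0
    · have hz : ∀ j ∈ s, a j = 0 := by
        intro j hj
        have := (Finset.sum_eq_zero_iff_of_nonneg
          (fun j hj => Real.rpow_nonneg (ha' j hj) _)).mp h0.symm j hj
        exact (Real.rpow_eq_zero (ha' j hj) hp.ne').mp this
      have : ∑ j ∈ s, a j • c j = 0 := Finset.sum_eq_zero fun j hj => by simp [hz j hj]
      rw [this, add_zero]
      refine hB.smul_mem hp (hc i (Finset.mem_insert_self i s)) hai ?_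
      by_contra hcon
      push_neg at hcon
      have : (1:ℝ) < a i ^ p := by
        calc (1:ℝ) = 1 ^ p := (Real.one_rpow p).symm
        _ < a i ^ p := Real.rpow_lt_rpow (by norm_num) hcon hp
      linarith
    · set r : ℝ := (∑ j ∈ s, a j ^ p) ^ (1/p) with hr
      have hr0 : 0 < r := Real.rpow_pos_of_pos h0 _
      have hrp : r ^ p = ∑ j ∈ s, a j ^ p := rpow_inv_self_rpow hSp0 hp.ne'
      have hy : ∑ j ∈ s, (a j / r) • c j ∈ B := by
        refine ih hc' (fun j => a j / r) (fun j hj => div_nonneg (ha' j hj) hr0.le) ?_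
        have : ∑ j ∈ s, (a j / r) ^ p = (∑ j ∈ s, a j ^ p) / r ^ p := by
          rw [Finset.sum_div]
          exact Finset.sum_congr rfl fun j hj => Real.div_rpow (ha' j hj) hr0.le p
        rw [this, hrp, div_self h0.ne']
      have := hB.combo_mem hp (hc i (Finset.mem_insert_self i s)) hy hai hr0.le
        (by rw [hrp]; linarith)
      rwa [Finset.smul_sum, Finset.sum_congr rfl
        (fun j hj => by rw [smul_smul, mul_div_cancel₀ _ hr0.ne'] : ∀ j ∈ s,
          r • ((a j / r) • c j) = a j • c j)] at this

/-- Conic Carathéodory with controlled coefficient sum. -/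
lemma conic_reduce {n : ℕ} {ι : Type*} [DecidableEq ι] :
    ∀ (N : ℕ) (s : Finset ι), s.card ≤ N → ∀ (t : ι → ℝ) (b : ι → Fin n → ℝ),
    (∀ i ∈ s, 0 ≤ t i) → (∑ i ∈ s, t i) ≤ 1 →
    ∃ s' : Finset ι, s' ⊆ s ∧ s'.card ≤ n ∧ ∃ t' : ι → ℝ,
      (∀ i ∈ s', 0 ≤ t' i) ∧ (∑ i ∈ s', t' i) ≤ 1 ∧
      ∑ i ∈ s', t' i • b i = ∑ i ∈ s, t i • b i := by
  intro N
  induction N with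
  | zero =>
    intro s hs t b ht hsum
    refine ⟨s, Finset.Subset.refl s, ?_, t, ht, hsum, rfl⟩
    omega
  | succ N ih =>
    intro s hs t b ht hsum
    by_cases hcard : s.card ≤ n
    · exact ⟨s, Finset.Subset.refl s, hcard, t, ht, hsum, rfl⟩
    push_neg at hcard
    have hdep : ¬ LinearIndependent ℝ (fun i : {x // x ∈ s} => b i) := by
      intro hli
      have := hli.fintype_card_le_finrank
      rw [Fintype.card_coe, Module.finrank_fintype_fun_eq_card, Fintype.card_fin] at this
      omega
    obtain ⟨g, hg0, j, hgj⟩ := Fintype.not_linearIndependent_iff.mp hdep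
    set lam0 : ι → ℝ := fun i => if h : i ∈ s then g ⟨i, h⟩ else 0 with hlam0
    have hlam0_sum : ∑ i ∈ s, lam0 i • b i = 0 := by
      rw [← Finset.sum_attach s (fun i => lam0 i • b i)]
      simpa [hlam0] using hg0
    have hlam0_ne : lam0 j.1 ≠ 0 := by simpa [hlam0, j.2] using hgj
    set lam : ι → ℝ := if 0 ≤ ∑ i ∈ s, lam0 i then lam0 else -lam0 with hlamdef
    have hlam_sum0 : ∑ i ∈ s, lam i • b i = 0 := by
      by_cases h : 0 ≤ ∑ i ∈ s, lam0 i <;>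
        simp [hlamdef, h, hlam0_sum, Finset.sum_neg_distrib, neg_smul]
    have hlam_nonneg : 0 ≤ ∑ i ∈ s, lam i := by
      by_cases h : 0 ≤ ∑ i ∈ s, lam0 i
      · simpa [hlamdef, h] using h
      · push_neg at h
        simp only [hlamdef, if_neg (not_le.mpr h), Pi.neg_apply]
        rw [Finset.sum_neg_distrib]
        linarith
    have hlam_ne : lam j.1 ≠ 0 := by
      by_cases h : 0 ≤ ∑ i ∈ s, lam0 i <;> simp [hlamdef, h, hlam0_ne]
    have hpos : ∃ i ∈ s, 0 < lam i := by
      by_contra hcon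
      push_neg at hcon
      have hzero : ∑ i ∈ s, lam i = 0 :=
        le_antisymm (Finset.sum_nonpos hcon) hlam_nonneg
      have : ∀ i ∈ s, lam i = 0 := fun i hi =>
        (Finset.sum_eq_zero_iff_of_nonpos hcon).mp hzero i hi
      exact hlam_ne (this j.1 j.2)
    obtain ⟨i₁, hi₁s, hi₁pos⟩ := hpos
    set P : Finset ι := s.filter (fun i => 0 < lam i) with hP
    have hPne : P.Nonempty := ⟨i₁, Finset.mem_filter.mpr ⟨hi₁s, hi₁pos⟩⟩
    obtain ⟨i₀, hi₀P, hi₀min⟩ := P.exists_min_image (fun i => t i / lam i) hPne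
    have hi₀s : i₀ ∈ s := (Finset.mem_filter.mp hi₀P).1
    have hi₀pos : 0 < lam i₀ := (Finset.mem_filter.mp hi₀P).2
    set θ : ℝ := t i₀ / lam i₀ with hθ
    have hθ0 : 0 ≤ θ := div_nonneg (ht i₀ hi₀s) hi₀pos.le
    set t' : ι → ℝ := fun i => t i - θ * lam i with ht'
    have ht'_nonneg : ∀ i ∈ s, 0 ≤ t' i := by
      intro i hi
      by_cases h : 0 < lam i
      · have hiP : i ∈ P := Finset.mem_filter.mpr ⟨hi, h⟩
        have := hi₀min i hiP
        have : θ * lam i ≤ t i := by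
          rw [hθ] at this ⊢
          calc t i₀ / lam i₀ * lam i ≤ t i / lam i * lam i :=
                mul_le_mul_of_nonneg_right this h.le
          _ = t i := div_mul_cancel₀ _ h.ne'
        simp only [ht']
        linarith
      · push_neg at h
        have : θ * lam i ≤ 0 := mul_nonpos_of_nonneg_of_nonpos hθ0 h
        have h2 := ht i hi
        simp only [ht']
        linarith
    have ht'_i₀ : t' i₀ = 0 := by
      simp only [ht', hθ]
      field_simp
      ring
    have ht'_sum : ∑ i ∈ s, t' i ≤ 1 := by
      have : ∑ i ∈ s, t' i = (∑ i ∈ s, t i) - θ * ∑ i ∈ s, lam i := by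
        simp only [ht']
        rw [Finset.sum_sub_distrib, Finset.mul_sum]
      rw [this]
      nlinarith
    have ht'_eq : ∑ i ∈ s, t' i • b i = ∑ i ∈ s, t i • b i := by
      have : ∀ i ∈ s, t' i • b i = t i • b i - θ • (lam i • b i) := by
        intro i hi
        simp only [ht', sub_smul, smul_smul]
      rw [Finset.sum_congr rfl this, Finset.sum_sub_distrib, ← Finset.smul_sum,
        hlam_sum0, smul_zero, sub_zero]
    have hcard' : (s.erase i₀).card ≤ N := by
      have := Finset.card_erase_of_mem hi₀s
      omega
    have herase_nonneg : ∀ i ∈ s.erase i₀, 0 ≤ t' i := fun i hi =>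
      ht'_nonneg i (Finset.mem_of_mem_erase hi)
    have herase_sum : ∑ i ∈ s.erase i₀, t' i ≤ 1 := by
      rwa [← Finset.add_sum_erase s t' hi₀s, ht'_i₀, zero_add] at ht'_sum
    obtain ⟨s', hs'sub, hs'card, t'', ht''0, ht''sum, ht''eq⟩ :=
      ih (s.erase i₀) hcard' t' b herase_nonneg herase_sum
    refine ⟨s', hs'sub.trans (Finset.erase_subset _ _), hs'card, t'', ht''0, ht''sum, ?_⟩
    rw [ht''eq, ← ht'_eq, ← Finset.add_sum_erase s (fun i => t' i • b i) hi₀s, ht'_i₀,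
      zero_smul, zero_add]

lemma sum_rpow_le {ι : Type*} (s : Finset ι) (a : ι → ℝ) {p : ℝ} (hp : 0 < p) (hp1 : p ≤ 1)
    (ha : ∀ i ∈ s, 0 ≤ a i) :
    ∑ i ∈ s, a i ^ p ≤ (s.card : ℝ) ^ ((1:ℝ) - p) * (∑ i ∈ s, a i) ^ p := by
  rcases Finset.eq_empty_or_nonempty s with rfl | hne
  · simp only [Finset.sum_empty, Finset.card_empty, Nat.cast_zero]
    exact mul_nonneg (Real.rpow_nonneg le_rfl _) (Real.rpow_nonneg le_rfl _)
  have hm : (0:ℝ) < s.card := by exact_mod_cast Finset.card_pos.mpr hne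
  have key := Real.arith_mean_le_rpow_mean s (fun _ => (s.card : ℝ)⁻¹) (fun i => a i ^ p)
    (fun i _ => by positivity) (by
      rw [Finset.sum_const, nsmul_eq_mul, mul_inv_cancel₀ hm.ne'])
    (fun i hi => Real.rpow_nonneg (ha i hi) _) (p := 1/p)
    ((le_div_iff₀ hp).mpr (by linarith))
  have h1 : ∀ i ∈ s, ((s.card:ℝ)⁻¹) * (a i ^ p) ^ ((1:ℝ)/p) = ((s.card:ℝ)⁻¹) * a i := by
    intro i hi
    rw [← Real.rpow_mul (ha i hi), mul_one_div_cancel hp.ne', Real.rpow_one]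
  rw [Finset.sum_congr rfl h1, one_div_one_div, ← Finset.mul_sum, ← Finset.mul_sum] at key
  have hsa : 0 ≤ ∑ i ∈ s, a i := Finset.sum_nonneg ha
  rw [Real.mul_rpow (by positivity) hsa] at key
  have h2 : (s.card : ℝ) * (((s.card:ℝ)⁻¹) ^ p * (∑ i ∈ s, a i) ^ p)
      = (s.card : ℝ) ^ ((1:ℝ) - p) * (∑ i ∈ s, a i) ^ p := by
    rw [Real.inv_rpow hm.le, ← mul_assoc]
    congr 1
    rw [← Real.rpow_neg_one ((s.card:ℝ) ^ p), ← Real.rpow_mul hm.le]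
    nth_rewrite 1 [← Real.rpow_one (s.card:ℝ)]
    rw [← Real.rpow_add hm]
    ring_nf
  calc ∑ i ∈ s, a i ^ p = (s.card : ℝ) * (((s.card:ℝ)⁻¹) * ∑ i ∈ s, a i ^ p) := by
        field_simp
  _ ≤ (s.card : ℝ) * (((s.card:ℝ)⁻¹) ^ p * (∑ i ∈ s, a i) ^ p) :=
        mul_le_mul_of_nonneg_left key hm.le
  _ = _ := h2

/-- The key geometric inclusion: `conv(B) ⊆ n^(1/p-1) • B`. -/
lemma IsPBall.convexHull_subset (hn : 0 < n) (hp : 0 < p) (hp1 : p ≤ 1)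
    (hB : IsPBall n p B) :
    convexHull ℝ B ⊆ ((n : ℝ) ^ ((1:ℝ)/p - 1)) • B := by
  intro x hx
  rw [convexHull_eq] at hx
  obtain ⟨ι, s, w, z, hw0, hw1, hz, hx⟩ := hx
  classical
  rw [Finset.centerMass_eq_of_sum_1 _ _ hw1] at hx
  obtain ⟨s', hsub, hcard, t', ht'0, ht'sum, ht'eq⟩ :=
    conic_reduce (n := n) s.card s le_rfl w z hw0 hw1.le
  set T : ℝ := (n : ℝ) ^ ((1:ℝ)/p - 1) with hT
  have hn' : (0:ℝ) < n := by exact_mod_cast hn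
  have hT0 : 0 < T := Real.rpow_pos_of_pos hn' _
  have hTp : T ^ p = (n:ℝ) ^ ((1:ℝ) - p) := by
    rw [hT, ← Real.rpow_mul hn'.le]
    congr 1
    field_simp
  have hnp0 : (0:ℝ) < (n:ℝ) ^ ((1:ℝ) - p) := Real.rpow_pos_of_pos hn' _
  have hsum_pow : ∑ i ∈ s', t' i ^ p ≤ (n:ℝ) ^ ((1:ℝ) - p) := by
    calc ∑ i ∈ s', t' i ^ p ≤ (s'.card : ℝ) ^ ((1:ℝ) - p) * (∑ i ∈ s', t' i) ^ p :=
          sum_rpow_le s' t' hp hp1 ht'0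
    _ ≤ (n:ℝ) ^ ((1:ℝ)-p) * 1 := by
          apply mul_le_mul
          · exact Real.rpow_le_rpow (by positivity) (by exact_mod_cast hcard) (by linarith)
          · exact Real.rpow_le_one (Finset.sum_nonneg ht'0) ht'sum hp.le
          · exact Real.rpow_nonneg (Finset.sum_nonneg ht'0) _
          · positivity
    _ = _ := mul_one _
  have hy : ∑ i ∈ s', (t' i / T) • z i ∈ B := by
    apply hB.sum_mem hp s' z (fun i hi => hz i (hsub hi)) (fun i => t' i / T)
      (fun i hi => div_nonneg (ht'0 i hi) hT0.le)
    have heq : ∀ i ∈ s', (t' i / T) ^ p = t' i ^ p / T ^ p :=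
      fun i hi => Real.div_rpow (ht'0 i hi) hT0.le p
    rw [Finset.sum_congr rfl heq, ← Finset.sum_div, hTp, div_le_one hnp0]
    exact hsum_pow
  refine ⟨_, hy, ?_⟩
  show T • (∑ i ∈ s', (t' i / T) • z i) = x
  rw [Finset.smul_sum, ← hx, ← ht'eq]
  exact Finset.sum_congr rfl fun i hi => by rw [smul_smul, mul_div_cancel₀ _ hT0.ne']

end Aux

/-- For a `p`-ball `B ⊆ ℝⁿ` with convex hull `B̂`, `(|B̂|/|B|)^(1/n) ≤ n^(1/p-1)`. -/
theorem pBall_convexHull_volume_ratio (n : ℕ) (hn : 0 < n) (p : ℝ) (hp : 0 < p)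
    (hp1 : p ≤ 1) (B : Set (Fin n → ℝ)) (hB : IsPBall n p B) :
    ((volume (convexHull ℝ B)).toReal / (volume B).toReal) ^ ((1 : ℝ) / n) ≤
      (n : ℝ) ^ ((1 : ℝ) / p - 1) := by
  set T : ℝ := (n : ℝ) ^ ((1:ℝ)/p - 1) with hT
  have hn' : (0:ℝ) < n := by exact_mod_cast hn
  have hT0 : 0 < T := Real.rpow_pos_of_pos hn' _
  have hsub := hB.convexHull_subset hn hp hp1
  have hBfin : volume B ≠ ⊤ := hB.1.measure_lt_top.ne
  have hBpos : 0 < volume B :=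
    Measure.measure_pos_of_nonempty_interior _ ⟨0, hB.2.2.1⟩
  have hvol : volume (convexHull ℝ B) ≤ ENNReal.ofReal (T ^ n) * volume B := by
    calc volume (convexHull ℝ B) ≤ volume (T • B) := measure_mono hsub
    _ = ENNReal.ofReal |T ^ Module.finrank ℝ (Fin n → ℝ)| * volume B :=
        Measure.addHaar_smul volume T B
    _ = ENNReal.ofReal (T ^ n) * volume B := by
        rw [Module.finrank_fintype_fun_eq_card, Fintype.card_fin,
          abs_of_pos (pow_pos hT0 n)]
  have h1 : (volume (convexHull ℝ B)).toReal ≤ T ^ n * (volume B).toReal := by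
    have hr : (ENNReal.ofReal (T ^ n) * volume B).toReal = T ^ n * (volume B).toReal := by
      rw [ENNReal.toReal_mul, ENNReal.toReal_ofReal (by positivity)]
    rw [← hr]
    exact ENNReal.toReal_mono (ENNReal.mul_ne_top ENNReal.ofReal_ne_top hBfin) hvol
  have hBt : 0 < (volume B).toReal := ENNReal.toReal_pos hBpos.ne' hBfin
  have hdiv : (volume (convexHull ℝ B)).toReal / (volume B).toReal ≤ T ^ n :=
    (div_le_iff₀ hBt).mpr h1
  calc ((volume (convexHull ℝ B)).toReal / (volume B).toReal) ^ ((1 : ℝ) / n)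
      ≤ (T ^ n) ^ ((1 : ℝ) / n) :=
        Real.rpow_le_rpow (div_nonneg ENNReal.toReal_nonneg ENNReal.toReal_nonneg) hdiv
          (by positivity)
  _ = T := by
        rw [← Real.rpow_natCast T n, ← Real.rpow_mul hT0.le, mul_one_div,
          div_self (by exact_mod_cast hn.ne' : (n:ℝ) ≠ 0), Real.rpow_one]
end
end

section
/- Lower Santaló bound for p-balls: assuming the Bourgain–Milman inequality for symmetric convex bodies (s(K) ≥ c·s(B_{ℓ₂ⁿ}) for a universal c > 0), there exists a constant C_p > 0 depending only on p such that for every p-ball B ⊆ ℝⁿ, s(B) = (|B|·|B°|)^(1/n) ≥ C_p · n^(−1/p). -/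
open MeasureTheory Set Pointwise ENNReal

noncomputable section

/-! ### Auxiliary lemmas -/

/-- A `p`-ball is star-shaped around the origin. -/
lemma pball_smul_mem {n : ℕ} {p : ℝ} (hp : 0 < p) {B : Set (Fin n → ℝ)}
    (hB : IsPBall n p B) {t : ℝ} (ht0 : 0 ≤ t) (ht1 : t ≤ 1) {x : Fin n → ℝ}
    (hx : x ∈ B) : t • x ∈ B := by
  obtain ⟨-, -, h0, hpc⟩ := hB
  have h0B : (0 : Fin n → ℝ) ∈ B := interior_subset h0
  have htp : t ^ p ≤ 1 := Real.rpow_le_one ht0 ht1 hp.le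
  have h1 : (0:ℝ) ≤ 1 - t ^ p := by linarith
  have hm : ((1 - t ^ p) ^ (1/p)) ^ p = 1 - t ^ p := by
    rw [← Real.rpow_mul h1, one_div_mul_cancel hp.ne', Real.rpow_one]
  have := hpc x hx 0 h0B t ((1 - t ^ p) ^ (1/p)) ht0 (Real.rpow_nonneg h1 _)
    (by rw [hm]; ring)
  simpa using this

/-- Key lemma: `p`-balls are closed under `p`-convex combinations. -/
lemma pball_sum_mem {n : ℕ} {p : ℝ} (hp : 0 < p) {B : Set (Fin n → ℝ)}
    (hB : IsPBall n p B) {ι : Type*} (s : Finset ι) (w : ι → ℝ) (z : ι → Fin n → ℝ)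
    (hw : ∀ i ∈ s, 0 ≤ w i) (hz : ∀ i ∈ s, z i ∈ B)
    (hsum : ∑ i ∈ s, w i ^ p ≤ 1) : ∑ i ∈ s, w i • z i ∈ B := by
  have h0B : (0 : Fin n → ℝ) ∈ B := interior_subset hB.2.2.1
  revert w
  induction s using Finset.cons_induction with
  | empty => intro w hw hsum; simpa using h0B
  | cons a s ha ih =>
    intro w hw hsum
    have hw' : ∀ i ∈ s, 0 ≤ w i := fun i hi => hw i (Finset.mem_cons_of_mem hi)
    have hz' : ∀ i ∈ s, z i ∈ B := fun i hi => hz i (Finset.mem_cons_of_mem hi)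
    have hwa : 0 ≤ w a := hw a (Finset.mem_cons_self a s)
    have hza : z a ∈ B := hz a (Finset.mem_cons_self a s)
    rw [Finset.sum_cons] at hsum ⊢
    set S : ℝ := ∑ i ∈ s, w i ^ p with hS
    have hS0 : 0 ≤ S := Finset.sum_nonneg fun i hi => Real.rpow_nonneg (hw' i hi) _
    have hwap : 0 ≤ w a ^ p := Real.rpow_nonneg hwa _
    have hS1 : S ≤ 1 := by linarith
    set m : ℝ := S ^ (1/p) with hmdef
    have hm0 : 0 ≤ m := Real.rpow_nonneg hS0 _
    have hmp : m ^ p = S := by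
      rw [hmdef, ← Real.rpow_mul hS0, one_div_mul_cancel hp.ne', Real.rpow_one]
    have hm1 : m ≤ 1 := Real.rpow_le_one hS0 hS1 (by positivity)
    rcases eq_or_lt_of_le hS0 with hSz | hSpos
    · -- S = 0 : all weights in s vanish
      have hzero : ∀ i ∈ s, w i = 0 := by
        intro i hi
        have h1 : w i ^ p = 0 := by
          have := Finset.sum_eq_zero_iff_of_nonneg
            (fun j hj => Real.rpow_nonneg (hw' j hj) p)
          rw [← hS, ← hSz] at this
          exact (this.mp rfl) i hi
        by_contra hne
        have : 0 < w i := lt_of_le_of_ne (hw' i hi) (Ne.symm hne)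
        exact absurd h1 (ne_of_gt (Real.rpow_pos_of_pos this p))
      have hsz : ∑ i ∈ s, w i • z i = 0 := by
        apply Finset.sum_eq_zero
        intro i hi; rw [hzero i hi, zero_smul]
      rw [hsz, add_zero]
      have hwa1 : w a ≤ 1 := by
        by_contra hgt
        push_neg at hgt
        have : (1:ℝ) < w a ^ p := by
          calc (1:ℝ) = 1 ^ p := (Real.one_rpow p).symm
          _ < w a ^ p := Real.rpow_lt_rpow zero_le_one hgt hp
        nlinarith
      exact pball_smul_mem hp hB hwa hwa1 hza
    · -- S > 0
      have hmpos : 0 < m := Real.rpow_pos_of_pos hSpos _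
      have hy : ∑ i ∈ s, (w i / m) • z i ∈ B := by
        apply ih hz' (fun i => w i / m) (fun i hi => div_nonneg (hw' i hi) hm0)
        show ∑ i ∈ s, (w i / m) ^ p ≤ 1
        have : ∑ i ∈ s, (w i / m) ^ p = S / m ^ p := by
          calc ∑ i ∈ s, (w i / m) ^ p = ∑ i ∈ s, w i ^ p / m ^ p :=
                Finset.sum_congr rfl fun i hi => Real.div_rpow (hw' i hi) hm0 p
          _ = S / m ^ p := by rw [← Finset.sum_div]
        rw [this, hmp, div_self hSpos.ne']
      set y : Fin n → ℝ := ∑ i ∈ s, (w i / m) • z i with hydef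
      have hmy : ∑ i ∈ s, w i • z i = m • y := by
        rw [hydef, Finset.smul_sum]
        exact Finset.sum_congr rfl fun i hi => by
          rw [smul_smul, mul_div_cancel₀ _ hmpos.ne']
      rw [hmy]
      set l' : ℝ := (1 - S) ^ (1/p) with hl'def
      have h1S : 0 ≤ 1 - S := by linarith
      have hl'0 : 0 ≤ l' := Real.rpow_nonneg h1S _
      have hl'p : l' ^ p = 1 - S := by
        rw [hl'def, ← Real.rpow_mul h1S, one_div_mul_cancel hp.ne', Real.rpow_one]
      rcases eq_or_lt_of_le hwa with hwaz | hwapos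
      · -- w a = 0
        rw [← hwaz, zero_smul, zero_add]
        exact pball_smul_mem hp hB hm0 hm1 hy
      · -- w a > 0
        have hwal' : w a ≤ l' := by
          by_contra hgt
          push_neg at hgt
          have : l' ^ p < w a ^ p := Real.rpow_lt_rpow hl'0 hgt hp
          rw [hl'p] at this
          linarith
        have hl'pos : 0 < l' := lt_of_lt_of_le hwapos hwal'
        have hxa : (w a / l') • z a ∈ B :=
          pball_smul_mem hp hB (by positivity) (div_le_one_of_le₀ hwal' hl'0) hza
        have := hB.2.2.2 _ hxa y hy l' m hl'0 hm0 (by rw [hl'p, hmp]; ring)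
        rwa [smul_smul, mul_div_cancel₀ _ hl'pos.ne'] at this

/-- Power–mean inequality via Jensen. -/
lemma sum_rpow_le_card {ι : Type*} [Fintype ι] {p : ℝ} (hp : 0 < p) (hp1 : p ≤ 1)
    (w : ι → ℝ) (hw : ∀ i, 0 ≤ w i) (hsum : ∑ i, w i = 1) :
    ∑ i, w i ^ p ≤ (Fintype.card ι : ℝ) ^ (1 - p) := by
  have hne : Nonempty ι := by
    by_contra h
    rw [not_nonempty_iff] at h
    rw [Finset.univ_eq_empty, Finset.sum_empty] at hsum
    exact one_ne_zero hsum.symm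
  have hm : (0:ℝ) < (Fintype.card ι : ℝ) := by
    exact_mod_cast Fintype.card_pos
  set m : ℝ := (Fintype.card ι : ℝ) with hmdef
  have jensen := (Real.concaveOn_rpow hp.le hp1).le_map_sum
    (t := Finset.univ) (w := fun _ : ι => 1/m) (p := w)
    (fun i _ => by positivity)
    (by rw [Finset.sum_const, Finset.card_univ, nsmul_eq_mul, ← hmdef,
          mul_one_div, div_self hm.ne'])
    (fun i _ => hw i)
  simp only [smul_eq_mul] at jensen
  have hlhs : ∑ i, (1/m) * w i ^ p = (1/m) * ∑ i, w i ^ p := by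
    rw [Finset.mul_sum]
  have hrhs : ∑ i, (1/m) * w i = 1/m := by
    rw [← Finset.mul_sum, hsum, mul_one]
  rw [hlhs, hrhs] at jensen
  have h1m : (1/m : ℝ) ^ p = 1 / m ^ p := by
    rw [Real.div_rpow zero_le_one hm.le, Real.one_rpow]
  rw [h1m] at jensen
  have : ∑ i, w i ^ p ≤ m * (1 / m ^ p) := by
    calc ∑ i, w i ^ p = m * ((1/m) * ∑ i, w i ^ p) := by
          field_simp
    _ ≤ m * (1 / m ^ p) := by
          apply mul_le_mul_of_nonneg_left jensen hm.le
  calc ∑ i, w i ^ p ≤ m * (1 / m ^ p) := this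
  _ = m ^ (1 - p) := by
      rw [Real.rpow_sub hm, Real.rpow_one, mul_one_div]

/-- The convex hull of a `p`-ball is inside a dilate of it. -/
lemma convexHull_pball_subset {n : ℕ} {p : ℝ} (hp : 0 < p) (hp1 : p ≤ 1)
    {B : Set (Fin n → ℝ)} (hB : IsPBall n p B) :
    convexHull ℝ B ⊆ ((n : ℝ) + 1) ^ (1/p - 1) • B := by
  intro x hx
  obtain ⟨ι, hι, z, w, hzB, hai, hw, hw1, hwz⟩ := eq_pos_convex_span_of_mem_convexHull hx
  set r : ℝ := ((n : ℝ) + 1) ^ (1/p - 1) with hrdef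
  have hn1 : (1:ℝ) ≤ (n:ℝ) + 1 := by
    have : (0:ℝ) ≤ (n:ℝ) := Nat.cast_nonneg n
    linarith
  have hexp : 0 ≤ 1/p - 1 := by
    have h : 1 ≤ 1/p := by rw [le_div_iff₀ hp]; linarith
    linarith
  have hr1 : 1 ≤ r := Real.one_le_rpow hn1 hexp
  have hr0 : 0 < r := lt_of_lt_of_le zero_lt_one hr1
  have hcard : (Fintype.card ι : ℝ) ≤ (n : ℝ) + 1 := by
    have h1 := hai.card_le_finrank_succ
    have h2 : Module.finrank ℝ (vectorSpan ℝ (Set.range z)) ≤ n := by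
      calc Module.finrank ℝ (vectorSpan ℝ (Set.range z))
          ≤ Module.finrank ℝ (Fin n → ℝ) := Submodule.finrank_le _
      _ = n := by simp [Module.finrank_fintype_fun_eq_card]
    have : Fintype.card ι ≤ n + 1 := le_trans h1 (by omega)
    exact_mod_cast this
  rw [Set.mem_smul_set_iff_inv_smul_mem₀ hr0.ne']
  have hrx : r⁻¹ • x = ∑ i, (w i / r) • z i := by
    rw [← hwz, Finset.smul_sum]
    exact Finset.sum_congr rfl fun i _ => by
      rw [smul_smul, inv_mul_eq_div]
  rw [hrx]
  apply pball_sum_mem hp hB Finset.univ (fun i => w i / r) z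
    (fun i _ => div_nonneg (hw i).le hr0.le)
    (fun i _ => hzB (Set.mem_range_self i))
  have hdiv : ∑ i, (w i / r) ^ p = (∑ i, w i ^ p) / r ^ p := by
    calc ∑ i, (w i / r) ^ p = ∑ i, w i ^ p / r ^ p :=
          Finset.sum_congr rfl fun i _ => Real.div_rpow (hw i).le hr0.le p
    _ = (∑ i, w i ^ p) / r ^ p := by rw [← Finset.sum_div]
  rw [hdiv]
  have hrp : r ^ p = ((n:ℝ) + 1) ^ (1 - p) := by
    rw [hrdef, ← Real.rpow_mul (by positivity)]
    congr 1
    field_simp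
  have hpm : ∑ i, w i ^ p ≤ (Fintype.card ι : ℝ) ^ (1 - p) :=
    sum_rpow_le_card hp hp1 w (fun i => (hw i).le) hw1
  have hle : (Fintype.card ι : ℝ) ^ (1 - p) ≤ ((n:ℝ) + 1) ^ (1 - p) :=
    Real.rpow_le_rpow (by positivity) hcard (by linarith)
  rw [hrp]
  rw [div_le_one (by positivity)]
  exact le_trans hpm hle

/-- The polar set of the closed convex hull equals the polar set. -/
lemma polarSet_closure_convexHull {n : ℕ} (B : Set (Fin n → ℝ)) :
    polarSet n (closure (convexHull ℝ B)) = polarSet n B := by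
  apply Set.Subset.antisymm
  · intro x hx y hy
    exact hx y (subset_closure (subset_convexHull ℝ B hy))
  · intro x hx
    have hcont : Continuous fun y : Fin n → ℝ => ∑ i, x i * y i :=
      continuous_finset_sum _ fun i _ => continuous_const.mul (continuous_apply i)
    have hlin : IsLinearMap ℝ fun y : Fin n → ℝ => ∑ i, x i * y i := by
      constructor
      · intro a b
        rw [← Finset.sum_add_distrib]
        exact Finset.sum_congr rfl fun i _ => by simp [mul_add]
      · intro c a
        rw [Finset.smul_sum]
        exact Finset.sum_congr rfl fun i _ => by simp [smul_eq_mul]; ring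
    have hS : closure (convexHull ℝ B) ⊆ {y | ∑ i, x i * y i ≤ 1} := by
      apply closure_minimal
      · exact convexHull_min (fun y hy => hx y hy) (convex_halfSpace_le hlin 1)
      · exact isClosed_le hcont continuous_const
    exact fun y hy => hS hy

/-- Lower bound for the volume of the Euclidean ball: it contains the cube of
side `2/√n`. -/
lemma euclBall_volume_lower {n : ℕ} (hn : 0 < n) :
    (4 : ℝ) / n ≤ ((volume (euclBall n)).toReal ^ 2) ^ ((1:ℝ)/n) := by
  have hn' : (0:ℝ) < n := Nat.cast_pos.mpr hn
  set a : ℝ := 1 / Real.sqrt n with hadef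
  have hsq : 0 < Real.sqrt n := Real.sqrt_pos.mpr hn'
  have ha : 0 < a := by positivity
  have ha2 : a ^ 2 = 1 / n := by
    rw [hadef, div_pow, one_pow, Real.sq_sqrt hn'.le]
  have hcube : (Set.univ.pi fun _ : Fin n => Icc (-a) a) ⊆ euclBall n := by
    intro x hx
    simp only [euclBall, Set.mem_setOf_eq]
    calc ∑ i, x i ^ 2 ≤ ∑ _i : Fin n, a ^ 2 := by
          apply Finset.sum_le_sum
          intro i _
          have h := hx i (Set.mem_univ i)
          exact sq_le_sq' h.1 h.2
    _ = n * a ^ 2 := by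
          rw [Finset.sum_const, Finset.card_univ, Fintype.card_fin, nsmul_eq_mul]
    _ = 1 := by rw [ha2]; field_simp
  have hbig : euclBall n ⊆ Set.univ.pi fun _ : Fin n => Icc (-1 : ℝ) 1 := by
    intro x hx i _
    have h1 : x i ^ 2 ≤ 1 := by
      calc x i ^ 2 ≤ ∑ j, x j ^ 2 :=
            Finset.single_le_sum (fun j _ => sq_nonneg (x j)) (Finset.mem_univ i)
      _ ≤ 1 := hx
    have h2 := (sq_le_one_iff_abs_le_one (x i)).mp h1
    exact ⟨neg_le_of_abs_le h2, le_of_abs_le h2⟩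
  have hvcube : volume (Set.univ.pi fun _ : Fin n => Icc (-a) a)
      = ENNReal.ofReal (2 * a) ^ n := by
    rw [volume_pi_pi]
    rw [Real.volume_Icc]
    rw [Finset.prod_const, Finset.card_univ, Fintype.card_fin]
    congr 1
    ring
  have hvbig : volume (Set.univ.pi fun _ : Fin n => Icc (-1:ℝ) 1)
      = ENNReal.ofReal 2 ^ n := by
    rw [volume_pi_pi, Real.volume_Icc]
    rw [Finset.prod_const, Finset.card_univ, Fintype.card_fin]
    norm_num
  have hfin : volume (euclBall n) ≠ ⊤ := by
    apply ne_top_of_le_ne_top _ (measure_mono hbig)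
    rw [hvbig]
    exact ENNReal.pow_ne_top ENNReal.ofReal_ne_top
  have hlow : (2*a) ^ n ≤ (volume (euclBall n)).toReal := by
    have h1 : ENNReal.ofReal ((2*a)^n) ≤ volume (euclBall n) := by
      rw [ENNReal.ofReal_pow (by positivity)]
      rw [← hvcube]
      exact measure_mono hcube
    calc (2*a)^n = (ENNReal.ofReal ((2*a)^n)).toReal := by
          rw [ENNReal.toReal_ofReal (by positivity)]
    _ ≤ (volume (euclBall n)).toReal := ENNReal.toReal_mono hfin h1
  have h2a : (0:ℝ) ≤ 2*a := by positivity
  have hfinal : (((2*a)^n : ℝ))^2 ≤ (volume (euclBall n)).toReal ^ 2 :=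
    pow_le_pow_left₀ (by positivity) hlow 2
  have key : ((((2*a)^n : ℝ))^2) ^ ((1:ℝ)/n) = (4:ℝ)/n := by
    rw [← pow_mul]
    rw [← Real.rpow_natCast (2*a) (n*2), ← Real.rpow_mul h2a]
    have hexp : ((n*2 : ℕ) : ℝ) * (1/n) = 2 := by
      push_cast
      field_simp
    rw [hexp]
    rw [show (2:ℝ) = ((2:ℕ):ℝ) by norm_num, Real.rpow_natCast]
    rw [mul_pow, ha2]
    ring
  calc (4:ℝ)/n = ((((2*a)^n : ℝ))^2) ^ ((1:ℝ)/n) := key.symm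
  _ ≤ ((volume (euclBall n)).toReal ^ 2) ^ ((1:ℝ)/n) :=
      Real.rpow_le_rpow (by positivity) hfinal (by positivity)

/-- Lower Santaló bound for `p`-balls (conditional on Bourgain–Milman): there is
`C_p > 0` with `s(B) ≥ C_p · n^(-1/p)` for every `p`-ball `B ⊆ ℝⁿ`. -/
theorem pBall_santalo_lower (p : ℝ) (hp : 0 < p) (hp1 : p ≤ 1)
    (hBM : ∃ c : ℝ, 0 < c ∧ ∀ n : ℕ, 0 < n → ∀ K : Set (Fin n → ℝ),
      IsCompact K → K = -K → Convex ℝ K → (0 : Fin n → ℝ) ∈ interior K →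
      c * ((volume (euclBall n)).toReal ^ 2) ^ ((1 : ℝ) / n) ≤ sVol n K) :
    ∃ C : ℝ, 0 < C ∧ ∀ n : ℕ, 0 < n → ∀ B : Set (Fin n → ℝ), IsPBall n p B →
      C * (n : ℝ) ^ (-(1 : ℝ) / p) ≤ sVol n B := by
  obtain ⟨c, hc, hBMall⟩ := hBM
  have h2pos : (0:ℝ) < (2:ℝ) ^ (1 - 1/p) := Real.rpow_pos_of_pos two_pos _
  refine ⟨c * 4 * (2:ℝ) ^ (1 - 1/p), by positivity, ?_⟩
  intro n hn B hB
  have hn' : (0:ℝ) < n := Nat.cast_pos.mpr hn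
  have hn1 : (1:ℝ) ≤ n := Nat.one_le_cast.mpr hn
  have hexp : 0 ≤ 1/p - 1 := by
    have h : 1 ≤ 1/p := by rw [le_div_iff₀ hp]; linarith
    linarith
  set r : ℝ := ((n:ℝ) + 1) ^ (1/p - 1) with hrdef
  have hr0 : 0 < r := Real.rpow_pos_of_pos (by positivity) _
  set K : Set (Fin n → ℝ) := closure (convexHull ℝ B) with hKdef
  have hBK : B ⊆ K := (subset_convexHull ℝ B).trans subset_closure
  have hKr : K ⊆ r • B :=
    closure_minimal (convexHull_pball_subset hp hp1 hB) (hB.1.smul r).isClosed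
  have hKc : IsCompact K := (hB.1.smul r).of_isClosed_subset isClosed_closure hKr
  have hCH : convexHull ℝ B = -(convexHull ℝ B) := by
    nth_rewrite 1 [hB.2.1]
    rw [convexHull_neg]
  have hconv_neg : Set.MapsTo Neg.neg (convexHull ℝ B) (convexHull ℝ B) := by
    intro z hz
    show -z ∈ convexHull ℝ B
    rw [hCH]
    exact Set.neg_mem_neg.mpr hz
  have hKneg : ∀ x ∈ K, -x ∈ K := fun x hx =>
    map_mem_closure continuous_neg hx hconv_neg
  have hKsym : K = -K := by
    apply Set.Subset.antisymm
    · intro x hx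
      exact Set.mem_neg.mpr (hKneg x hx)
    · intro x hx
      have h := hKneg (-x) (Set.mem_neg.mp hx)
      simpa using h
  have hKconv : Convex ℝ K := (convex_convexHull ℝ B).closure
  have hK0 : (0 : Fin n → ℝ) ∈ interior K := interior_mono hBK hB.2.2.1
  have hsK := hBMall n hn K hKc hKsym hKconv hK0
  -- volume comparisons
  have hvolK : volume K ≤ ENNReal.ofReal (r ^ n) * volume B := by
    calc volume K ≤ volume (r • B) := measure_mono hKr
    _ = ENNReal.ofReal (r ^ Module.finrank ℝ (Fin n → ℝ)) * volume B :=
        Measure.addHaar_smul_of_nonneg volume hr0.le B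
    _ = ENNReal.ofReal (r ^ n) * volume B := by
        rw [Module.finrank_fintype_fun_eq_card, Fintype.card_fin]
  have hBfin : volume B ≠ ⊤ := hB.1.measure_lt_top.ne
  have hvK : (volume K).toReal ≤ r ^ n * (volume B).toReal := by
    have h := ENNReal.toReal_mono
      (ENNReal.mul_ne_top ENNReal.ofReal_ne_top hBfin) hvolK
    rwa [ENNReal.toReal_mul, ENNReal.toReal_ofReal (by positivity)] at h
  have hpolar : polarSet n K = polarSet n B := polarSet_closure_convexHull B
  have hvP0 : (0:ℝ) ≤ (volume (polarSet n B)).toReal := ENNReal.toReal_nonneg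
  have hvB0 : (0:ℝ) ≤ (volume B).toReal := ENNReal.toReal_nonneg
  have hvK0 : (0:ℝ) ≤ (volume K).toReal := ENNReal.toReal_nonneg
  have hsKle : sVol n K ≤ r * sVol n B := by
    rw [sVol, sVol, hpolar]
    calc ((volume K).toReal * (volume (polarSet n B)).toReal) ^ ((1:ℝ)/n)
        ≤ (r ^ n * (volume B).toReal * (volume (polarSet n B)).toReal) ^ ((1:ℝ)/n) := by
          apply Real.rpow_le_rpow (by positivity) ?_ (by positivity)
          exact mul_le_mul_of_nonneg_right hvK hvP0
    _ = (r ^ n) ^ ((1:ℝ)/n) *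
          ((volume B).toReal * (volume (polarSet n B)).toReal) ^ ((1:ℝ)/n) := by
          rw [mul_assoc, Real.mul_rpow (by positivity) (by positivity)]
    _ = r * ((volume B).toReal * (volume (polarSet n B)).toReal) ^ ((1:ℝ)/n) := by
          rw [← Real.rpow_natCast r n, ← Real.rpow_mul hr0.le]
          rw [mul_one_div, div_self hn'.ne', Real.rpow_one]
  have hball := euclBall_volume_lower hn
  have h4 : c * (4 / n) ≤ r * sVol n B := by
    calc c * (4/n) ≤ c * ((volume (euclBall n)).toReal ^ 2) ^ ((1:ℝ)/n) :=
          mul_le_mul_of_nonneg_left hball hc.le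
    _ ≤ sVol n K := hsK
    _ ≤ r * sVol n B := hsKle
  have h5 : c * (4/n) / r ≤ sVol n B := by
    rw [div_le_iff₀ hr0]
    linarith [h4, mul_comm r (sVol n B)]
  refine le_trans ?_ h5
  rw [le_div_iff₀ hr0]
  -- final arithmetic
  have h6 : r ≤ (2:ℝ)^(1/p-1) * (n:ℝ)^(1/p-1) := by
    calc r ≤ (2*(n:ℝ))^(1/p-1) :=
          Real.rpow_le_rpow (by positivity) (by linarith) hexp
    _ = (2:ℝ)^(1/p-1) * (n:ℝ)^(1/p-1) := Real.mul_rpow (by norm_num) hn'.le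
  have h8 : (2:ℝ)^(1-1/p) * (2:ℝ)^(1/p-1) = 1 := by
    rw [← Real.rpow_add two_pos]
    norm_num
  have h9 : (n:ℝ)^(-(1:ℝ)/p) * (n:ℝ)^(1/p-1) = (n:ℝ)^(-1:ℝ) := by
    rw [← Real.rpow_add hn']
    congr 1
    ring
  calc c * 4 * (2:ℝ)^(1-1/p) * (n:ℝ)^(-(1:ℝ)/p) * r
      ≤ c * 4 * (2:ℝ)^(1-1/p) * (n:ℝ)^(-(1:ℝ)/p) * ((2:ℝ)^(1/p-1) * (n:ℝ)^(1/p-1)) := by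
        apply mul_le_mul_of_nonneg_left h6 (by positivity)
  _ = c * 4 * ((2:ℝ)^(1-1/p) * (2:ℝ)^(1/p-1)) * ((n:ℝ)^(-(1:ℝ)/p) * (n:ℝ)^(1/p-1)) := by
        ring
  _ = c * 4 * 1 * (n:ℝ)^(-1:ℝ) := by rw [h8, h9]
  _ = c * (4/n) := by
        rw [Real.rpow_neg_one]
        field_simp
end
end
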